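/- Let X be a real vector space, E, F : X → ℝ ∪ {∞} functionals with E ≤ F, both p-homogeneous under positive scaling, X₀ = {x : E(x) = F(x) < ∞} nonempty, and d a distance function with d(λx, X₀) = λ·d(x, X₀) for λ > 0. Suppose the local stability estimate holds: there is c > 0 and a function r : [0,∞) → ℝ with r(t)/t^p → 0 as t → 0, such that F(x) − E(x) ≥ c·d(x,X₀)^p + r(d(x,X₀)) for all x. Then the global stability inequality F(x) − E(x) ≥ c·d(x,X₀)^p holds for all x ∈ X. -/
import Mathlib


open Filter


lemma key_real (p c : ℝ) (hp : 0 < p) (D dx : ℝ) (hdx : 0 ≤ dx)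
    (r : ℝ → ℝ)
    (hr : Tendsto (fun t : ℝ => r t / t ^ p) (nhdsWithin 0 (Set.Ioi 0)) (nhds 0))
    (h : ∀ lam : ℝ, 0 < lam → c * (lam * dx) ^ p + r (lam * dx) ≤ lam ^ p * D) :
    c * dx ^ p ≤ D := by
  rcases eq_or_lt_of_le hdx with h0 | h0
  · -- dx = 0
    rw [← h0, Real.zero_rpow hp.ne', mul_zero]
    have hseq : Tendsto (fun n : ℕ => r 0 / (n + 1 : ℝ) ^ p) atTop (nhds 0) := by
      apply Tendsto.div_atTop (tendsto_const_nhds)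
      exact (tendsto_rpow_atTop hp).comp (tendsto_atTop_add_const_right _ 1 tendsto_natCast_atTop_atTop)
    refine le_of_tendsto hseq (Eventually.of_forall fun n => ?_)
    have hn : (0 : ℝ) < (n + 1 : ℝ) := by positivity
    have := h (n + 1) hn
    rw [← h0, mul_zero, Real.zero_rpow hp.ne', mul_zero, zero_add] at this
    rw [div_le_iff₀ (Real.rpow_pos_of_pos hn p)]
    linarith [this]
  · -- dx > 0
    have hmain : ∀ lam : ℝ, 0 < lam →
        c * dx ^ p + dx ^ p * (r (lam * dx) / (lam * dx) ^ p) ≤ D := by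
      intro lam hlam
      have hl := h lam hlam
      have hlp : (0:ℝ) < lam ^ p := Real.rpow_pos_of_pos hlam p
      have hdp : (0:ℝ) < dx ^ p := Real.rpow_pos_of_pos h0 p
      have hmul : (lam * dx) ^ p = lam ^ p * dx ^ p :=
        Real.mul_rpow hlam.le hdx
      rw [hmul] at hl ⊢
      rw [← sub_nonneg]
      have : lam ^ p * (D - (c * dx ^ p + dx ^ p * (r (lam * dx) / (lam ^ p * dx ^ p)))) =
          lam ^ p * D - (c * (lam ^ p * dx ^ p) + r (lam * dx)) := by
        field_simp
      nlinarith [mul_nonneg hlp.le (sub_nonneg.mpr (le_refl D))]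
    -- limit argument
    have htend : Tendsto (fun lam : ℝ => c * dx ^ p + dx ^ p * (r (lam * dx) / (lam * dx) ^ p))
        (nhdsWithin 0 (Set.Ioi 0)) (nhds (c * dx ^ p + dx ^ p * 0)) := by
      apply Tendsto.const_add
      apply Tendsto.const_mul
      apply hr.comp
      have : Tendsto (fun lam : ℝ => lam * dx) (nhdsWithin 0 (Set.Ioi 0)) (nhds 0) := by
        have := (tendsto_id.mul_const dx : Tendsto (fun lam : ℝ => lam * dx) (nhds 0) (nhds (0 * dx)))
        rw [zero_mul] at this
        exact this.mono_left nhdsWithin_le_nhds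
      refine tendsto_nhdsWithin_of_tendsto_nhds_of_eventually_within _ this ?_
      filter_upwards [self_mem_nhdsWithin] with lam hlam
      exact mul_pos hlam h0
    rw [mul_zero, add_zero] at htend
    exact le_of_tendsto htend (eventually_nhdsWithin_of_forall fun lam hlam => hmain lam hlam)

/-- In the abstract homogeneous stability framework, local stability with
matching power `p` (with a remainder `r(d(x,X₀))` of order `o(d(x,X₀)^p)`) implies
global stability with the same constant. -/
theorem local_stability_implies_global_stability
    {X : Type*} [AddCommGroup X] [Module ℝ X]
    (E F : X → EReal) (p c : ℝ) (hp : 0 < p) (hc : 0 < c)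
    (hEF : ∀ x, E x ≤ F x)
    (hEhom : ∀ lam : ℝ, 0 < lam → ∀ x, E (lam • x) = ((lam ^ p : ℝ) : EReal) * E x)
    (hFhom : ∀ lam : ℝ, 0 < lam → ∀ x, F (lam • x) = ((lam ^ p : ℝ) : EReal) * F x)
    (X₀ : Set X) (hX₀ : X₀ = {x | E x = F x ∧ F x < ⊤}) (hX₀ne : X₀.Nonempty)
    -- `d x` denotes the distance from `x` to the optimizer set `X₀`
    (d : X → ℝ) (hd0 : ∀ x, 0 ≤ d x)
    (hdhom : ∀ lam : ℝ, 0 < lam → ∀ x, d (lam • x) = lam * d x)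
    (r : ℝ → ℝ)
    (hr : Tendsto (fun t : ℝ => r t / t ^ p) (nhdsWithin 0 (Set.Ioi 0)) (nhds 0))
    (hloc : ∀ x, ((c * d x ^ p + r (d x) : ℝ) : EReal) ≤ F x - E x) :
    ∀ x, ((c * d x ^ p : ℝ) : EReal) ≤ F x - E x := by
  intro x
  have trich : ∀ y : EReal, y = ⊥ ∨ y = ⊤ ∨ ∃ e : ℝ, y = (e : EReal) := by
    intro y
    induction y using EReal.rec with
    | bot => exact Or.inl rfl
    | top => exact Or.inr (Or.inl rfl)
    | coe e => exact Or.inr (Or.inr ⟨e, rfl⟩)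
  have hbot : (⊥ : EReal) < F x - E x := lt_of_lt_of_le (EReal.bot_lt_coe _) (hloc x)
  rcases trich (E x) with hE | hE | ⟨e, hE⟩
  · rw [hE] at hbot ⊢
    rcases eq_or_ne (F x) ⊥ with hF | hF
    · rw [hF] at hbot; simp at hbot
    · rw [EReal.sub_bot hF]; exact le_top
  · have hF : F x = ⊤ := top_le_iff.mp (hE ▸ hEF x)
    rw [hE, hF] at hbot
    simp at hbot
  · rcases trich (F x) with hF | hF | ⟨f, hF⟩
    · rw [hE, hF] at hbot; simp at hbot
    · rw [hE, hF, EReal.top_sub_coe]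
      exact le_top
    · rw [hE, hF, ← EReal.coe_sub, EReal.coe_le_coe_iff]
      apply key_real p c hp (f - e) (d x) (hd0 x) r hr
      intro lam hlam
      have h1 := hloc (lam • x)
      rw [hdhom lam hlam x, hEhom lam hlam x, hFhom lam hlam x, hE, hF] at h1
      rw [← EReal.coe_mul, ← EReal.coe_mul, ← EReal.coe_sub, EReal.coe_le_coe_iff] at h1
      nlinarith [h1]
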